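/- If the tree representation of a secondary structure S admits a separated proper coloring, then S is designable over {A,U,C,G} in the Watson-Crick model. -/

import Mathlib

open scoped Classical

/-- An RNA nucleotide. -/
inductive Base | A | U | C | G
deriving DecidableEq, Inhabited, Repr

/-- The Watson-Crick pairing relation (only G-C and A-U pairs allowed). -/
def wcPair : Base → Base → Prop
  | .G, .C => True | .C, .G => True
  | .A, .U => True | .U, .A => True
  | _, _ => False

/-- The Nussinov-Jacobson pairing relation (G-C, A-U and G-U pairs allowed). -/
def njPair : Base → Base → Prop
  | .G, .C => True | .C, .G => True
  | .A, .U => True | .U, .A => True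
  | .G, .U => True | .U, .G => True
  | _, _ => False

/-- An RNA (pseudoknot-free) secondary structure, 0-indexed positions. -/
structure SecStr where
  len : ℕ
  pairs : Finset (ℕ × ℕ)
  lt : ∀ p ∈ pairs, p.1 < p.2
  ub : ∀ p ∈ pairs, p.2 < len
  once : ∀ p ∈ pairs, ∀ q ∈ pairs, p ≠ q →
    p.1 ≠ q.1 ∧ p.1 ≠ q.2 ∧ p.2 ≠ q.1 ∧ p.2 ≠ q.2
  noncross : ∀ p ∈ pairs, ∀ q ∈ pairs,
    ¬ (p.1 < q.1 ∧ q.1 < p.2 ∧ p.2 < q.2)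

def SecStr.pairedAt (S : SecStr) (i : ℕ) : Prop := ∃ p ∈ S.pairs, p.1 = i ∨ p.2 = i
def SecStr.unpairedAt (S : SecStr) (i : ℕ) : Prop := i < S.len ∧ ¬ S.pairedAt i
def SecStr.saturated (S : SecStr) : Prop := ∀ i < S.len, S.pairedAt i

/-- A structure is compatible with a sequence `w` (w.r.t. pairing relation `R`)
if it has the right length and all base pairs are `R`-valid. -/
def compat {α : Type*} [Inhabited α] (R : α → α → Prop) (w : List α) (S : SecStr) : Prop :=
  S.len = w.length ∧ ∀ p ∈ S.pairs, R (w.getD p.1 default) (w.getD p.2 default)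

/-- Base-pair-sum free energy of a structure on a sequence. -/
noncomputable def energy {α : Type*} [Inhabited α] (E : α → α → ℝ) (w : List α)
    (S : SecStr) : ℝ :=
  ∑ p ∈ S.pairs, E (w.getD p.1 default) (w.getD p.2 default)

/-- `w` is a Δ-design for `S`: `S` is compatible with `w`, and every other
compatible structure has energy at least `energy E w S + Δ`. -/
def isDesign {α : Type*} [Inhabited α] (R : α → α → Prop) (E : α → α → ℝ) (Δ : ℝ)
    (w : List α) (S : SecStr) : Prop :=
  compat R w S ∧ ∀ S' : SecStr, compat R w S' → S' ≠ S →
    energy E w S' ≥ energy E w S + Δ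

/- Tree representation machinery. -/
def encloses (q p : ℕ × ℕ) : Prop := q.1 < p.1 ∧ p.2 < q.2
def SecStr.hasParent (S : SecStr) (p : ℕ × ℕ) : Prop := ∃ q ∈ S.pairs, encloses q p
def SecStr.isParentOf (S : SecStr) (q p : ℕ × ℕ) : Prop :=
  q ∈ S.pairs ∧ p ∈ S.pairs ∧ encloses q p ∧ ¬ ∃ m ∈ S.pairs, encloses q m ∧ encloses m p

/-- Degree of a paired node: number of paired children plus one for the parent (if any). -/
noncomputable def SecStr.pairDeg (S : SecStr) (p : ℕ × ℕ) : ℕ :=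
  (S.pairs.filter (fun c => S.isParentOf p c)).card + (if S.hasParent p then 1 else 0)
/-- Degree of the virtual root: number of top-level base pairs. -/
noncomputable def SecStr.rootDeg (S : SecStr) : ℕ :=
  (S.pairs.filter (fun p => ¬ S.hasParent p)).card
/-- All nodes of the tree representation (including the virtual root) have degree ≤ d. -/
def SecStr.degLE (S : SecStr) (d : ℕ) : Prop :=
  S.rootDeg ≤ d ∧ ∀ p ∈ S.pairs, S.pairDeg p ≤ d

/-- A sequence is saturable if a saturated structure is compatible with it. -/
def saturable {α : Type*} [Inhabited α] (R : α → α → Prop) (w : List α) : Prop :=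
  ∃ S : SecStr, compat R w S ∧ S.saturated
/-- Atomic saturable: saturable, and no (nonempty) proper prefix is saturable. -/
def atomicSaturable {α : Type*} [Inhabited α] (R : α → α → Prop) (w : List α) : Prop :=
  saturable R w ∧ ∀ k, 0 < k → k < w.length → ¬ saturable R (w.take k)

/- Motifs. -/
def SecStr.unpChildOfPair (S : SecStr) (q : ℕ × ℕ) (u : ℕ) : Prop :=
  S.unpairedAt u ∧ q.1 < u ∧ u < q.2 ∧
    ¬ ∃ m ∈ S.pairs, q.1 < m.1 ∧ m.1 < u ∧ u < m.2 ∧ m.2 < q.2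
def SecStr.unpChildOfRoot (S : SecStr) (u : ℕ) : Prop :=
  S.unpairedAt u ∧ ¬ ∃ m ∈ S.pairs, m.1 < u ∧ u < m.2
/-- Motif m₅ : a tree node (possibly the root) of degree greater than four. -/
def hasM5 (S : SecStr) : Prop := 4 < S.rootDeg ∨ ∃ p ∈ S.pairs, 4 < S.pairDeg p
/-- Motif m₃∘ : a node with an unpaired child and degree greater than two. -/
def hasM3o (S : SecStr) : Prop :=
  (∃ q ∈ S.pairs, (∃ u, S.unpChildOfPair q u) ∧ 2 < S.pairDeg q) ∨
  ((∃ u, S.unpChildOfRoot u) ∧ 2 < S.rootDeg)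

/- Colorings of the tree representation. -/
inductive Col | black | white | gray
deriving DecidableEq

noncomputable def childCount (S : SecStr) (col : ℕ × ℕ → Col) (q : ℕ × ℕ) (c : Col) : ℕ :=
  (S.pairs.filter (fun p => S.isParentOf q p ∧ col p = c)).card
noncomputable def rootChildCount (S : SecStr) (col : ℕ × ℕ → Col) (c : Col) : ℕ :=
  (S.pairs.filter (fun p => ¬ S.hasParent p ∧ col p = c)).card

/-- A proper coloring of the tree representation. -/
def properCol (S : SecStr) (col : ℕ × ℕ → Col) : Prop :=
  rootChildCount S col .black ≤ 1 ∧ rootChildCount S col .white ≤ 1 ∧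
  rootChildCount S col .gray ≤ 2 ∧
  ∀ q ∈ S.pairs,
    childCount S col q .black ≤ 1 ∧ childCount S col q .white ≤ 1 ∧
    childCount S col q .gray ≤ 2 ∧
    childCount S col q (col q) ≤ 1 ∧
    (col q = .black → ∀ p ∈ S.pairs, S.isParentOf q p → col p ≠ .white) ∧
    (col q = .white → ∀ p ∈ S.pairs, S.isParentOf q p → col p ≠ .black)

/-- Level of a paired node: #black minus #white on the path to the root (incl. itself). -/
noncomputable def pairLvl (S : SecStr) (col : ℕ × ℕ → Col) (p : ℕ × ℕ) : ℤ :=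
  ((S.pairs.filter (fun q => q.1 ≤ p.1 ∧ p.2 ≤ q.2 ∧ col q = .black)).card : ℤ) -
  ((S.pairs.filter (fun q => q.1 ≤ p.1 ∧ p.2 ≤ q.2 ∧ col q = .white)).card : ℤ)
/-- Level of an unpaired node. -/
noncomputable def unpLvl (S : SecStr) (col : ℕ × ℕ → Col) (u : ℕ) : ℤ :=
  ((S.pairs.filter (fun q => q.1 < u ∧ u < q.2 ∧ col q = .black)).card : ℤ) -
  ((S.pairs.filter (fun q => q.1 < u ∧ u < q.2 ∧ col q = .white)).card : ℤ)

/-- Separated coloring: gray-node levels and unpaired-node levels are disjoint. -/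
def separatedCol (S : SecStr) (col : ℕ × ℕ → Col) : Prop :=
  ∀ p ∈ S.pairs, col p = .gray → ∀ u, S.unpairedAt u →
    pairLvl S col p ≠ unpLvl S col u

/-- A bipartite energy model: its compatibility graph is bipartite. -/
def Bipartite {α : Type*} (R : α → α → Prop) : Prop :=
  ∃ f : α → Bool, ∀ a b, R a b → f a ≠ f b

/-- The k-stutter of a sequence. -/
def stutterSeq {α : Type*} (w : List α) (k : ℕ) : List α :=
  w.flatMap (fun a => List.replicate k a)
/-- The base pairs of the k-stutter of a structure. -/
def stutterPairs (S : SecStr) (k : ℕ) : Finset (ℕ × ℕ) :=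
  S.pairs.biUnion (fun p => (Finset.range k).image
    (fun m => (k * p.1 + m, k * p.2 + (k - 1 - m))))

/-- Two base pairs belong to the same band (maximal stack) of S. -/
def sameBand (S : SecStr) (p p' : ℕ × ℕ) : Prop :=
  p ∈ S.pairs ∧ p' ∈ S.pairs ∧ p.1 + p.2 = p'.1 + p'.2 ∧
  ∀ x, min p.1 p'.1 ≤ x → x ≤ max p.1 p'.1 → (x, p.1 + p.2 - x) ∈ S.pairs

/-- Nussinov-Jacobson energies: a for G-C, b for A-U, g for G-U. -/
def njE (a b g : ℝ) : Base → Base → ℝ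
  | .G, .C => a | .C, .G => a
  | .A, .U => b | .U, .A => b
  | .G, .U => g | .U, .G => g
  | _, _ => 0

/-- level of position i : #G minus #C in the prefix of w ending at i. -/
def lvl (w : List Base) (i : ℕ) : ℤ :=
  ((w.take (i+1)).count Base.G : ℤ) - ((w.take (i+1)).count Base.C : ℤ)

/-!
The word puts `A` at the unpaired positions, `G…C` on black pairs, `C…G` on white pairs, and
`U…A` or `A…U` on gray pairs. A gray pair opens with `U` iff an even number of nodes on its path to
the root have an earlier gray sibling; since a gray node has at most one gray child and a node at
most two gray children, a gray child then has the orientation of its gray parent, and two gray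
siblings have opposite orientations.

Let `M` be another structure compatible with the word. Each Watson-Crick pair has exactly one letter
in `{C, U}`, and in the word every such letter lies on a pair of `S`, so `M` has at most as many
pairs as `S`; if it has as many, every `G`, `C` and `U` is paired in `M`. Then `G`s and `C`s balance
inside each pair of `M`, so the level (`#G - #C` of the prefix) agrees at both ends of a pair of
`M`. An `A–U` pair of `M` whose `A` is unpaired in `S` would put an unpaired position at the level
of a gray pair, against separation; so `M` pairs exactly the positions paired in `S`. Finally, by
induction on the right end, each pair of `M` joins ends of pairs of `S` that cannot be a parent and
its child or two siblings, because the coloring rules exclude the letter combinations this would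
produce; so it is a pair of `S`.
-/

namespace SecStr

variable {S M : SecStr} {p q r m P : ℕ × ℕ} {a b i : ℕ} {B : ℕ → Prop}

theorem eq_of_fst_eq (hp : p ∈ S.pairs) (hq : q ∈ S.pairs) (h : p.1 = q.1) : p = q := by
  by_contra hne; exact (S.once p hp q hq hne).1 h

theorem eq_of_snd_eq (hp : p ∈ S.pairs) (hq : q ∈ S.pairs) (h : p.2 = q.2) : p = q := by
  by_contra hne; exact (S.once p hp q hq hne).2.2.2 h

theorem fst_ne_snd (hp : p ∈ S.pairs) (hq : q ∈ S.pairs) : p.1 ≠ q.2 := by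
  by_cases hne : p = q
  · subst hne; exact (S.lt p hp).ne
  · exact (S.once p hp q hq hne).2.1

theorem eq_of_endpoint_eq (hp : p ∈ S.pairs) (hq : q ∈ S.pairs)
    (hpi : p.1 = i ∨ p.2 = i) (hqi : q.1 = i ∨ q.2 = i) : p = q := by
  rcases hpi with hpi | hpi <;> rcases hqi with hqi | hqi
  · exact eq_of_fst_eq hp hq (hpi.trans hqi.symm)
  · exact absurd (hpi.trans hqi.symm) (fst_ne_snd hp hq)
  · exact absurd (hqi.trans hpi.symm) (fst_ne_snd hq hp)
  · exact eq_of_snd_eq hp hq (hpi.trans hqi.symm)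

theorem snd_lt_of_fst_between (hp : p ∈ S.pairs) (hq : q ∈ S.pairs) (h₁ : p.1 < q.1)
    (h₂ : q.1 < p.2) : q.2 < p.2 := by
  have := S.noncross p hp q hq
  have := (S.once p hp q hq (by rintro rfl; omega)).2.2.2
  omega

theorem fst_lt_of_snd_between (hp : p ∈ S.pairs) (hq : q ∈ S.pairs) (h₁ : p.1 < q.2)
    (h₂ : q.2 < p.2) : p.1 < q.1 := by
  have := S.noncross q hq p hp
  have := (S.once p hp q hq (by rintro rfl; omega)).1
  have := S.lt q hq
  omega

theorem encloses_of_encloses_of_fst_lt (hp : p ∈ S.pairs) (hq : q ∈ S.pairs) (hr : r ∈ S.pairs)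
    (hpr : encloses p r) (hqr : encloses q r) (h : p.1 < q.1) : encloses p q :=
  ⟨h, snd_lt_of_fst_between hp hq h (by have := S.lt r hr; unfold encloses at *; omega)⟩

theorem exists_isParentOf (hr : r ∈ S.pairs) (h : S.hasParent r) : ∃ P, S.isParentOf P r := by
  obtain ⟨P, hP, hPmax⟩ := Finset.exists_max_image (S.pairs.filter (encloses · r)) Prod.fst
    (by obtain ⟨q, hq, hqr⟩ := h; exact ⟨q, Finset.mem_filter.2 ⟨hq, hqr⟩⟩)
  rw [Finset.mem_filter] at hP
  refine ⟨P, hP.1, hr, hP.2, fun ⟨m, hm, hPm, hmr⟩ => ?_⟩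
  have := hPmax m (Finset.mem_filter.2 ⟨hm, hmr⟩)
  exact absurd hPm.1 (not_lt.2 this)

theorem eq_or_encloses_of_isParentOf (hP : S.isParentOf P r) (hq : q ∈ S.pairs)
    (hqr : encloses q r) : q = P ∨ encloses q P := by
  obtain ⟨hPm, hr, hPr, hPn⟩ := hP
  rcases lt_trichotomy q.1 P.1 with h | h | h
  · exact Or.inr (encloses_of_encloses_of_fst_lt hq hPm hr hqr hPr h)
  · exact Or.inl (eq_of_fst_eq hq hPm h)
  · exact (hPn ⟨q, hq, encloses_of_encloses_of_fst_lt hPm hq hr hPr hqr h, hqr⟩).elim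

theorem pairedAt.lt_len (h : S.pairedAt i) : i < S.len := by
  obtain ⟨p, hp, rfl | rfl⟩ := h
  · exact (S.lt p hp).trans (S.ub p hp)
  · exact S.ub p hp

def SameAncestors (S : SecStr) (p q : ℕ × ℕ) : Prop :=
  ∀ r ∈ S.pairs, encloses r p ↔ encloses r q

theorem SameAncestors.symm (h : S.SameAncestors p q) : S.SameAncestors q p :=
  fun r hr => (h r hr).symm

theorem isParentOf.of_sameAncestors (hP : S.isParentOf P p) (hpq : S.SameAncestors p q)
    (hq : q ∈ S.pairs) : S.isParentOf P q :=
  ⟨hP.1, hq, (hpq P hP.1).1 hP.2.2.1,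
    fun ⟨m, hm, hPm, hmq⟩ => hP.2.2.2 ⟨m, hm, hPm, (hpq m hm).2 hmq⟩⟩

def IntervalClosed (S : SecStr) (a b : ℕ) : Prop :=
  ∀ r ∈ S.pairs, (a < r.1 ∧ r.1 < b) ∨ (a < r.2 ∧ r.2 < b) → a < r.1 ∧ r.2 < b

theorem intervalClosed_of_mem (hp : p ∈ S.pairs) : S.IntervalClosed p.1 p.2 := by
  rintro r hr (h | h)
  · exact ⟨h.1, snd_lt_of_fst_between hp hr h.1 h.2⟩
  · exact ⟨fst_lt_of_snd_between hp hr h.1 h.2, h.2⟩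

namespace IntervalClosed

variable (hcl : S.IntervalClosed a b)
include hcl

theorem le_snd (hr : r ∈ S.pairs) (h : r.1 = a) : b ≤ r.2 := by
  by_contra! h'
  have := hcl r hr (Or.inr ⟨h ▸ S.lt r hr, h'⟩)
  omega

theorem fst_le (hr : r ∈ S.pairs) (h : r.2 = b) : r.1 ≤ a := by
  by_contra! h'
  have := hcl r hr (Or.inl ⟨h', h ▸ S.lt r hr⟩)
  omega

theorem eq_of_fst_of_snd (hab : a < b) (hp : p ∈ S.pairs) (hq : q ∈ S.pairs) (hpa : p.1 = a)
    (hqb : q.2 = b) : p = q := by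
  have := hcl.le_snd hp hpa
  have hqa := hcl.fst_le hq hqb
  rcases hqa.lt_or_eq with h | h
  · have := S.noncross q hq p hp
    have := (S.once p hp q hq (by rintro rfl; omega)).2.2.2
    omega
  · exact eq_of_fst_eq hp hq (hpa.trans h.symm)

theorem isParentOf_of_fst_of_fst (hab : a < b) (hp : p ∈ S.pairs) (hq : q ∈ S.pairs)
    (hpa : p.1 = a) (hqb : q.1 = b) : S.isParentOf p q := by
  have hbp : b < p.2 := (hcl.le_snd hp hpa).lt_of_ne fun h => fst_ne_snd hq hp (hqb.trans h)
  refine ⟨hp, hq, ⟨by omega, snd_lt_of_fst_between hp hq (by omega) (by omega)⟩, ?_⟩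
  rintro ⟨m, hm, ⟨hpm, -⟩, hmq, hqm⟩
  have := hcl m hm (Or.inl ⟨by omega, by omega⟩)
  have := S.lt q hq
  omega

theorem isParentOf_of_snd_of_snd (hab : a < b) (hp : p ∈ S.pairs) (hq : q ∈ S.pairs)
    (hpa : p.2 = a) (hqb : q.2 = b) : S.isParentOf q p := by
  have hqa : q.1 < a := (hcl.fst_le hq hqb).lt_of_ne fun h => fst_ne_snd hq hp (h.trans hpa.symm)
  refine ⟨hq, hp, ⟨fst_lt_of_snd_between hq hp (by omega) (by omega), by omega⟩, ?_⟩
  rintro ⟨m, hm, ⟨-, hmq⟩, hpm, hmp⟩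
  have := hcl m hm (Or.inr ⟨by omega, by omega⟩)
  have := S.lt p hp
  omega

theorem sameAncestors_of_snd_of_fst (hab : a < b) (hp : p ∈ S.pairs) (hq : q ∈ S.pairs)
    (hpa : p.2 = a) (hqb : q.1 = b) : S.SameAncestors p q := by
  intro r hr
  have := S.lt p hp
  have := S.lt q hq
  constructor
  · rintro ⟨h₁, h₂⟩
    have hr₂ : b < r.2 := by
      have := hcl r hr
      have := fst_ne_snd hq hr
      omega
    exact ⟨by omega, snd_lt_of_fst_between hr hq (by omega) (by omega)⟩
  · rintro ⟨h₁, h₂⟩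
    have hr₁ : r.1 < a := by
      have := hcl r hr
      have := fst_ne_snd hr hp
      omega
    exact ⟨fst_lt_of_snd_between hr hp (by omega) (by omega), by omega⟩

end IntervalClosed

theorem sum_eq_sum_pairs {β : Type*} [AddCommMonoid β] (S : SecStr) (T : Finset ℕ) (f : ℕ → β)
    (hf : ∀ i ∈ T, ¬ S.pairedAt i → f i = 0) :
    ∑ i ∈ T, f i =
      ∑ p ∈ S.pairs, ((if p.1 ∈ T then f p.1 else 0) + (if p.2 ∈ T then f p.2 else 0)) := by
  have hends : ∀ g : ℕ × ℕ → ℕ, Set.InjOn g S.pairs →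
      ∑ p ∈ S.pairs, (if g p ∈ T then f (g p) else 0) =
        ∑ i ∈ (S.pairs.image g).filter (· ∈ T), f i := fun g hg => by
    rw [Finset.sum_filter, Finset.sum_image hg]
  rw [Finset.sum_add_distrib, hends Prod.fst fun p hp q hq => eq_of_fst_eq hp hq,
    hends Prod.snd fun p hp q hq => eq_of_snd_eq hp hq, ← Finset.sum_union]
  · refine (Finset.sum_subset (fun i hi => ?_) fun i hi hi' => ?_).symm
    · simp only [Finset.mem_union, Finset.mem_filter] at hi
      tauto
    · refine hf i hi fun ⟨p, hp, hpi⟩ => hi' ?_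
      simp only [Finset.mem_union, Finset.mem_filter, Finset.mem_image]
      rcases hpi with hpi | hpi
      exacts [Or.inl ⟨⟨p, hp, hpi⟩, hi⟩, Or.inr ⟨⟨p, hp, hpi⟩, hi⟩]
  · simp only [Finset.disjoint_left, Finset.mem_filter, Finset.mem_image]
    rintro i ⟨⟨p, hp, rfl⟩, -⟩ ⟨⟨q, hq, hqp⟩, -⟩
    exact fst_ne_snd hp hq hqp.symm

theorem sum_Ico_eq_zero_of_mem (hm : m ∈ S.pairs) (f : ℕ → ℤ) (hf : ∀ i, ¬ S.pairedAt i → f i = 0)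
    (hpair : ∀ p ∈ S.pairs, f p.1 + f p.2 = 0) : ∑ i ∈ Finset.Ico (m.1 + 1) m.2, f i = 0 := by
  rw [S.sum_eq_sum_pairs _ _ fun i _ hi => hf i hi]
  refine Finset.sum_eq_zero fun p hp => ?_
  have hcl := S.intervalClosed_of_mem hm p hp
  have := S.lt p hp
  have : (m.1 < p.1 ∧ p.1 < m.2) ↔ (m.1 < p.2 ∧ p.2 < m.2) :=
    ⟨fun h => by have := hcl (Or.inl h); omega, fun h => by have := hcl (Or.inr h); omega⟩
  simp only [Finset.mem_Ico, Order.add_one_le_iff]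
  by_cases h : m.1 < p.1 ∧ p.1 < m.2
  · rw [if_pos h, if_pos (this.1 h), hpair p hp]
  · rw [if_neg h, if_neg (mt this.2 h), add_zero]

section Counting

variable (hSB : ∀ i, B i → S.pairedAt i) (hM : ∀ p ∈ M.pairs, B p.1 ∨ B p.2)
include hSB hM

theorem card_pairs_le_sum :
    M.pairs.card ≤ ∑ i ∈ Finset.range S.len, if B i ∧ M.pairedAt i then 1 else 0 := by
  rw [M.sum_eq_sum_pairs _ _ fun i _ hi => if_neg fun h => hi h.2, Finset.card_eq_sum_ones]
  refine Finset.sum_le_sum fun p hp => ?_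
  have h₁ : M.pairedAt p.1 := ⟨p, hp, Or.inl rfl⟩
  have h₂ : M.pairedAt p.2 := ⟨p, hp, Or.inr rfl⟩
  rcases hM p hp with h | h <;> simp [h, h₁, h₂, (hSB _ h).lt_len]

variable (hS : ∀ p ∈ S.pairs, B p.1 ↔ ¬ B p.2)
include hS

omit hM in
theorem sum_eq_card_pairs : ∑ i ∈ Finset.range S.len, (if B i then 1 else 0) = S.pairs.card := by
  rw [S.sum_eq_sum_pairs _ _ fun i _ hi => if_neg (mt (hSB i) hi), Finset.card_eq_sum_ones]
  refine Finset.sum_congr rfl fun p hp => ?_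
  have h₁ : p.1 < S.len := (S.lt p hp).trans (S.ub p hp)
  by_cases h : B p.1
  · simp [h, (hS p hp).1 h, h₁]
  · simp [h, not_not.1 (mt (hS p hp).2 h), S.ub p hp]

theorem card_le_card_of_endpoints : M.pairs.card ≤ S.pairs.card :=
  (card_pairs_le_sum hSB hM).trans <| (Finset.sum_le_sum fun i _ => by split_ifs <;> simp_all).trans
    (sum_eq_card_pairs hSB hS).le

theorem pairedAt_of_card_le (hcard : S.pairs.card ≤ M.pairs.card) (hi : B i) : M.pairedAt i := by
  have hle : ∀ j ∈ Finset.range S.len,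
      (if B j ∧ M.pairedAt j then 1 else 0) ≤ (if B j then 1 else 0) := fun j _ => by
    split_ifs <;> simp_all
  have heq := (Finset.sum_eq_sum_iff_of_le hle).1 <| le_antisymm (Finset.sum_le_sum hle) <|
    (sum_eq_card_pairs hSB hS).trans_le (hcard.trans (card_pairs_le_sum hSB hM))
  have := heq i (Finset.mem_range.2 (hSB i hi).lt_len)
  simpa [hi] using this

end Counting

end SecStr

def Col.bound : Col → ℕ
  | .black => 1
  | .white => 1
  | .gray => 2

namespace properCol

variable {S : SecStr} {col : ℕ × ℕ → Col} {p q g P : ℕ × ℕ} (hpc : properCol S col)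
include hpc

theorem rootChildCount_le (c : Col) : rootChildCount S col c ≤ c.bound := by
  cases c
  exacts [hpc.1, hpc.2.1, hpc.2.2.1]

theorem childCount_le (hq : q ∈ S.pairs) (c : Col) : childCount S col q c ≤ c.bound := by
  obtain ⟨h₁, h₂, h₃, -⟩ := hpc.2.2.2 q hq
  cases c
  exacts [h₁, h₂, h₃]

theorem card_le_of_sameAncestors (hg : g ∈ S.pairs) {s : Finset (ℕ × ℕ)} {c : Col}
    (hs : ∀ p ∈ s, p ∈ S.pairs ∧ S.SameAncestors g p ∧ col p = c) : s.card ≤ c.bound := by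
  by_cases h : S.hasParent g
  · obtain ⟨P, hP⟩ := S.exists_isParentOf hg h
    refine (Finset.card_le_card fun p hp => ?_).trans (hpc.childCount_le hP.1 c)
    obtain ⟨hpS, hgp, hc⟩ := hs p hp
    exact Finset.mem_filter.2 ⟨hpS, hP.of_sameAncestors hgp hpS, hc⟩
  · refine (Finset.card_le_card fun p hp => ?_).trans (hpc.rootChildCount_le c)
    obtain ⟨hpS, hgp, hc⟩ := hs p hp
    exact Finset.mem_filter.2 ⟨hpS, fun ⟨r, hr, hrp⟩ => h ⟨r, hr, (hgp r hr).2 hrp⟩, hc⟩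

theorem eq_of_isParentOf (hp : S.isParentOf P p) (hq : S.isParentOf P q) (hcp : col p = col P)
    (hcq : col q = col P) : p = q :=
  Finset.card_le_one.1 (hpc.2.2.2 P hp.1).2.2.2.1 p (Finset.mem_filter.2 ⟨hp.2.1, hp, hcp⟩)
    q (Finset.mem_filter.2 ⟨hq.2.1, hq, hcq⟩)

end properCol

def HasEarlierGraySibling (S : SecStr) (col : ℕ × ℕ → Col) (t : ℕ × ℕ) : Prop :=
  ∃ r ∈ S.pairs, col r = .gray ∧ r.2 < t.1 ∧ S.SameAncestors r t

noncomputable def flipCount (S : SecStr) (col : ℕ × ℕ → Col) (g : ℕ × ℕ) : ℕ :=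
  (S.pairs.filter fun t => (t = g ∨ encloses t g) ∧ HasEarlierGraySibling S col t).card

def OpensWithU (S : SecStr) (col : ℕ × ℕ → Col) (g : ℕ × ℕ) : Prop :=
  Even (flipCount S col g)

namespace properCol

variable {S : SecStr} {col : ℕ × ℕ → Col} {p q P : ℕ × ℕ} (hpc : properCol S col)
include hpc

theorem opensWithU_iff_of_isParentOf (hP : S.isParentOf P q) (hcP : col P = .gray)
    (hcq : col q = .gray) : OpensWithU S col q ↔ OpensWithU S col P := by
  have hq : ¬ HasEarlierGraySibling S col q := by
    rintro ⟨r, hr, hcr, hrq, hsib⟩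
    have := hpc.eq_of_isParentOf (hP.of_sameAncestors hsib.symm hr) hP (hcr.trans hcP.symm)
      (hcq.trans hcP.symm)
    subst this
    exact absurd hrq (S.lt r hr).not_gt
  unfold OpensWithU flipCount
  congr! 3 with t ht
  refine and_congr_left fun ht' => ⟨?_, ?_⟩
  · rintro (rfl | htq)
    · exact absurd ht' hq
    · exact S.eq_or_encloses_of_isParentOf hP ht htq
  · rintro (rfl | htP)
    · exact Or.inr hP.2.2.1
    · exact Or.inr ⟨htP.1.trans hP.2.2.1.1, hP.2.2.1.2.trans htP.2⟩

theorem opensWithU_iff_not_of_sameAncestors (hp : p ∈ S.pairs) (hq : q ∈ S.pairs)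
    (hpq : S.SameAncestors p q) (hlt : p.2 < q.1) (hcp : col p = .gray) (hcq : col q = .gray) :
    OpensWithU S col q ↔ ¬ OpensWithU S col p := by
  have hp' : ¬ HasEarlierGraySibling S col p := by
    rintro ⟨r, hr, hcr, hrp, hrp'⟩
    have hcard := hpc.card_le_of_sameAncestors hp (s := {r, p, q}) (c := .gray) (by
      simp only [Finset.mem_insert, Finset.mem_singleton]
      rintro x (rfl | rfl | rfl)
      exacts [⟨hr, hrp'.symm, hcr⟩, ⟨hp, fun _ _ => Iff.rfl, hcp⟩, ⟨hq, hpq, hcq⟩])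
    have := S.lt p hp
    have := S.lt q hq
    have hr : r ∉ ({p, q} : Finset _) := by
      simp only [Finset.mem_insert, Finset.mem_singleton]
      rintro (rfl | rfl) <;> omega
    rw [Finset.card_insert_of_notMem hr, Finset.card_pair (by rintro rfl; omega)] at hcard
    exact absurd hcard (by decide)
  have hcount : flipCount S col q = flipCount S col p + 1 := by
    unfold flipCount
    rw [← Finset.card_insert_of_notMem (s := Finset.filter _ _) (a := q)]
    · congr 1
      ext t
      simp only [Finset.mem_filter, Finset.mem_insert]
      constructor
      · rintro ⟨ht, rfl | htq, hE⟩
        · exact Or.inl rfl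
        · exact Or.inr ⟨ht, Or.inr ((hpq t ht).2 htq), hE⟩
      · rintro (rfl | ⟨ht, rfl | htp, hE⟩)
        · exact ⟨hq, Or.inl rfl, p, hp, hcp, hlt, hpq⟩
        · exact absurd hE hp'
        · exact ⟨ht, Or.inr ((hpq t ht).1 htp), hE⟩
    · rw [Finset.mem_filter]
      rintro ⟨-, rfl | hqp, -⟩
      · exact absurd hlt (S.lt q hq).not_gt
      · exact absurd hqp.1 (by have := S.lt p hp; omega)
  unfold OpensWithU
  rw [hcount, Nat.even_add_one]

end properCol

def Base.weight : Base → ℤ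
  | .G => 1
  | .C => -1
  | _ => 0

def Col.weight : Col → ℤ
  | .black => 1
  | .white => -1
  | .gray => 0

theorem wcPair.weight_add_weight {a b : Base} (h : wcPair a b) : a.weight + b.weight = 0 := by
  cases a <;> cases b <;> simp_all [wcPair, Base.weight]

theorem wcPair.symm {a b : Base} (h : wcPair a b) : wcPair b a := by
  cases a <;> cases b <;> simp_all [wcPair]

theorem wcPair_A_iff {b : Base} : wcPair .A b ↔ b = .U := by
  cases b <;> simp [wcPair]

theorem wcPair.iff_not {K : Finset Base} (hGC : .G ∈ K ↔ .C ∉ K) (hAU : .A ∈ K ↔ .U ∉ K)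
    {a b : Base} (h : wcPair a b) : a ∈ K ↔ b ∉ K := by
  cases a <;> cases b <;> simp only [wcPair] at h <;> tauto

theorem wcPair.or {K : Finset Base} (hGC : .G ∈ K ↔ .C ∉ K) (hAU : .A ∈ K ↔ .U ∉ K) {a b : Base}
    (h : wcPair a b) : a ∈ K ∨ b ∈ K :=
  (em (a ∈ K)).imp_right fun ha => not_not.1 (mt (h.iff_not hGC hAU).2 ha)

section Word

variable (S : SecStr) (col : ℕ × ℕ → Col)

noncomputable def openLetter (p : ℕ × ℕ) : Base :=
  match col p with
  | .black => .G
  | .white => .C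
  | .gray => if OpensWithU S col p then .U else .A

noncomputable def closeLetter (p : ℕ × ℕ) : Base :=
  match col p with
  | .black => .C
  | .white => .G
  | .gray => if OpensWithU S col p then .A else .U

noncomputable def letter (i : ℕ) : Base :=
  if h : ∃ p ∈ S.pairs, p.1 = i then openLetter S col h.choose
  else if h : ∃ p ∈ S.pairs, p.2 = i then closeLetter S col h.choose
  else .A

noncomputable def designWord : List Base :=
  (List.range S.len).map (letter S col)

variable {S col} {p : ℕ × ℕ} {i : ℕ}

theorem letter_fst (hp : p ∈ S.pairs) : letter S col p.1 = openLetter S col p := by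
  have h : ∃ q ∈ S.pairs, q.1 = p.1 := ⟨p, hp, rfl⟩
  rw [letter, dif_pos h, S.eq_of_fst_eq h.choose_spec.1 hp h.choose_spec.2]

theorem letter_snd (hp : p ∈ S.pairs) : letter S col p.2 = closeLetter S col p := by
  have h : ∃ q ∈ S.pairs, q.2 = p.2 := ⟨p, hp, rfl⟩
  rw [letter, dif_neg fun ⟨q, hq, hqp⟩ => S.fst_ne_snd hq hp hqp, dif_pos h,
    S.eq_of_snd_eq h.choose_spec.1 hp h.choose_spec.2]

theorem letter_of_not_pairedAt (h : ¬ S.pairedAt i) : letter S col i = .A := by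
  rw [letter, dif_neg fun ⟨q, hq, hqi⟩ => h ⟨q, hq, Or.inl hqi⟩,
    dif_neg fun ⟨q, hq, hqi⟩ => h ⟨q, hq, Or.inr hqi⟩]

theorem pairedAt_of_letter_ne_A (h : letter S col i ≠ .A) : S.pairedAt i :=
  not_not.1 (mt letter_of_not_pairedAt h)

theorem pairedAt_of_letter_mem {K : Finset Base} (hKA : .A ∉ K) (h : letter S col i ∈ K) :
    S.pairedAt i :=
  pairedAt_of_letter_ne_A fun hA => hKA (hA ▸ h)

theorem weight_openLetter : (openLetter S col p).weight = (col p).weight := by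
  cases hc : col p <;> simp only [openLetter, hc] <;> [rfl; rfl; split <;> rfl]

theorem wcPair_openLetter_closeLetter : wcPair (openLetter S col p) (closeLetter S col p) := by
  unfold openLetter closeLetter
  split <;> [trivial; trivial; split <;> trivial]

theorem wcPair_letter (hp : p ∈ S.pairs) : wcPair (letter S col p.1) (letter S col p.2) := by
  rw [letter_fst hp, letter_snd hp]
  exact wcPair_openLetter_closeLetter

theorem exists_gray_of_letter_eq_U (h : letter S col i = .U) :
    ∃ g ∈ S.pairs, col g = .gray ∧ (g.1 = i ∨ g.2 = i) := by
  obtain ⟨g, hg, hgi⟩ := pairedAt_of_letter_ne_A (h ▸ by decide : letter S col i ≠ .A)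
  refine ⟨g, hg, ?_, hgi⟩
  rcases hgi with rfl | rfl
  · rw [letter_fst hg, openLetter] at h
    split at h <;> simp_all
  · rw [letter_snd hg, closeLetter] at h
    split at h <;> simp_all

theorem compat_designWord_iff {M : SecStr} :
    compat wcPair (designWord S col) M ↔
      M.len = S.len ∧ ∀ p ∈ M.pairs, wcPair (letter S col p.1) (letter S col p.2) := by
  have hget : ∀ j < S.len, (designWord S col).getD j default = letter S col j := fun j hj => by
    rw [designWord, List.getD_eq_getElem?_getD, List.getElem?_map, List.getElem?_range hj]
    rfl
  rw [compat, designWord, List.length_map, List.length_range]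
  refine and_congr_right fun hlen => forall₂_congr fun p hp => ?_
  have := M.lt p hp
  have := M.ub p hp
  rw [← designWord, hget _ (by omega), hget _ (by omega)]

end Word

namespace properCol

variable {S : SecStr} {col : ℕ × ℕ → Col} {p q : ℕ × ℕ} {a b : ℕ} (hpc : properCol S col)
include hpc

theorem not_wcPair_openLetter_of_isParentOf (h : S.isParentOf p q) :
    ¬ wcPair (openLetter S col p) (openLetter S col q) := by
  obtain ⟨-, -, -, -, hb, hw⟩ := hpc.2.2.2 p h.1
  have hb := fun hc => hb hc q h.2.1 h
  have hw := fun hc => hw hc q h.2.1 h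
  have hor := hpc.opensWithU_iff_of_isParentOf h
  cases hcp : col p <;> cases hcq : col q <;> simp only [openLetter, hcp, hcq] <;>
    (try split_ifs) <;> simp_all [wcPair]

theorem not_wcPair_closeLetter_of_isParentOf (h : S.isParentOf p q) :
    ¬ wcPair (closeLetter S col q) (closeLetter S col p) := by
  obtain ⟨-, -, -, -, hb, hw⟩ := hpc.2.2.2 p h.1
  have hb := fun hc => hb hc q h.2.1 h
  have hw := fun hc => hw hc q h.2.1 h
  have hor := hpc.opensWithU_iff_of_isParentOf h
  cases hcp : col p <;> cases hcq : col q <;> simp only [closeLetter, hcp, hcq] <;>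
    (try split_ifs) <;> simp_all [wcPair]

theorem not_wcPair_of_sameAncestors (hp : p ∈ S.pairs) (hq : q ∈ S.pairs)
    (hpq : S.SameAncestors p q) (hlt : p.2 < q.1) :
    ¬ wcPair (closeLetter S col p) (openLetter S col q) := by
  have hne : p ≠ q := by rintro rfl; exact absurd hlt (S.lt p hp).not_gt
  have hsib : col q = col p → 2 ≤ (col p).bound := fun hcq => by
    have := hpc.card_le_of_sameAncestors hp (s := {p, q}) (c := col p) (by
      simp only [Finset.mem_insert, Finset.mem_singleton]
      rintro x (rfl | rfl)
      exacts [⟨hp, fun _ _ => Iff.rfl, rfl⟩, ⟨hq, hpq, hcq⟩])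
    rwa [Finset.card_pair hne] at this
  have hor := hpc.opensWithU_iff_not_of_sameAncestors hp hq hpq hlt
  cases hcp : col p <;> cases hcq : col q <;> simp only [openLetter, closeLetter, hcp, hcq] <;>
    (try split_ifs) <;> simp_all [wcPair, Col.bound]

theorem mem_pairs_of_intervalClosed (hab : a < b) (hcl : S.IntervalClosed a b)
    (ha : S.pairedAt a) (hb : S.pairedAt b) (hwc : wcPair (letter S col a) (letter S col b)) :
    (a, b) ∈ S.pairs := by
  obtain ⟨p, hp, rfl | rfl⟩ := ha <;> obtain ⟨q, hq, rfl | rfl⟩ := hb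
  · rw [letter_fst hp, letter_fst hq] at hwc
    exact absurd hwc (hpc.not_wcPair_openLetter_of_isParentOf
      (hcl.isParentOf_of_fst_of_fst hab hp hq rfl rfl))
  · obtain rfl := hcl.eq_of_fst_of_snd hab hp hq rfl rfl
    exact hp
  · rw [letter_snd hp, letter_fst hq] at hwc
    exact absurd hwc (hpc.not_wcPair_of_sameAncestors hp hq
      (hcl.sameAncestors_of_snd_of_fst hab hp hq rfl rfl) hab)
  · rw [letter_snd hp, letter_snd hq] at hwc
    exact absurd hwc (hpc.not_wcPair_closeLetter_of_isParentOf
      (hcl.isParentOf_of_snd_of_snd hab hp hq rfl rfl))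

end properCol

theorem card_filter_black_sub_card_filter_white (s : Finset (ℕ × ℕ)) (col : ℕ × ℕ → Col)
    (P : ℕ × ℕ → Prop) :
    ((s.filter fun q => P q ∧ col q = .black).card : ℤ) -
      (s.filter fun q => P q ∧ col q = .white).card = ∑ q ∈ s.filter P, (col q).weight := by
  simp only [Finset.card_filter, Finset.sum_filter]
  push_cast
  rw [← Finset.sum_sub_distrib]
  refine Finset.sum_congr rfl fun q _ => ?_
  by_cases hP : P q <;> cases col q <;> simp [hP, Col.weight]

section Level

variable {S : SecStr} {col : ℕ × ℕ → Col} {g : ℕ × ℕ} {u : ℕ}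

variable (S col) in
noncomputable def prefixLevel (n : ℕ) : ℤ :=
  ∑ i ∈ Finset.range n, (letter S col i).weight

theorem prefixLevel_eq_sum (n : ℕ) :
    prefixLevel S col n = ∑ q ∈ S.pairs.filter (fun q => q.1 < n ∧ n ≤ q.2), (col q).weight := by
  rw [prefixLevel, S.sum_eq_sum_pairs _ _ fun i _ hi => by rw [letter_of_not_pairedAt hi]; rfl,
    Finset.sum_filter]
  refine Finset.sum_congr rfl fun q hq => ?_
  have hw := (wcPair_letter (col := col) hq).weight_add_weight
  rw [letter_fst hq, weight_openLetter] at hw ⊢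
  have := S.lt q hq
  simp only [Finset.mem_range]
  split_ifs <;> omega

theorem pairLvl_eq_sum (S : SecStr) (col : ℕ × ℕ → Col) (g : ℕ × ℕ) :
    pairLvl S col g = ∑ q ∈ S.pairs.filter (fun q => q.1 ≤ g.1 ∧ g.2 ≤ q.2), (col q).weight := by
  simp only [pairLvl, ← and_assoc]
  convert card_filter_black_sub_card_filter_white S.pairs col _

theorem pairLvl_eq_prefixLevel_snd (hg : g ∈ S.pairs) :
    pairLvl S col g = prefixLevel S col g.2 := by
  rw [pairLvl_eq_sum, prefixLevel_eq_sum]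
  refine Finset.sum_congr (Finset.filter_congr fun q hq => ⟨?_, ?_⟩) fun _ _ => rfl
  · have := S.lt g hg
    omega
  · rintro ⟨h₁, h₂⟩
    refine ⟨?_, h₂⟩
    by_contra! h
    have := S.snd_lt_of_fst_between hg hq h h₁
    omega

theorem pairLvl_eq_prefixLevel_fst_add_one (hg : g ∈ S.pairs) :
    pairLvl S col g = prefixLevel S col (g.1 + 1) := by
  rw [pairLvl_eq_sum, prefixLevel_eq_sum]
  refine Finset.sum_congr (Finset.filter_congr fun q hq => ⟨?_, ?_⟩) fun _ _ => rfl
  · rintro ⟨h₁, h₂⟩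
    have := S.lt g hg
    omega
  · rintro ⟨h₁, h₂⟩
    refine ⟨by omega, ?_⟩
    rcases (Nat.le_of_lt_succ h₁).lt_or_eq with h | h
    · exact (S.snd_lt_of_fst_between hq hg h (by omega)).le
    · rw [S.eq_of_fst_eq hg hq h.symm]

theorem unpLvl_eq_prefixLevel (hu : ¬ S.pairedAt u) : unpLvl S col u = prefixLevel S col u := by
  have hfilter : S.pairs.filter (fun q => q.1 < u ∧ u ≤ q.2) =
      S.pairs.filter (fun q => q.1 < u ∧ u < q.2) := Finset.filter_congr fun q hq => by
    have : q.2 ≠ u := fun h => hu ⟨q, hq, Or.inr h⟩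
    omega
  rw [prefixLevel_eq_sum, hfilter, unpLvl]
  simp only [← and_assoc]
  convert card_filter_black_sub_card_filter_white S.pairs col _

end Level

section Competitor

variable {S M : SecStr} {col : ℕ × ℕ → Col} {i : ℕ}
  (hM : compat wcPair (designWord S col) M)
include hM

theorem wcPair_letter_of_compat {p : ℕ × ℕ} (hp : p ∈ M.pairs) :
    wcPair (letter S col p.1) (letter S col p.2) :=
  (compat_designWord_iff.1 hM).2 p hp

/-- Each pair of `S`, and each pair of `M`, has exactly one endpoint whose letter lies in `K`. -/
theorem card_le_and_pairedAt_of_compat {K : Finset Base} (hGC : .G ∈ K ↔ .C ∉ K)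
    (hAU : .A ∈ K ↔ .U ∉ K) (hK : ∀ i, M.pairedAt i → letter S col i ∈ K → S.pairedAt i) :
    M.pairs.card ≤ S.pairs.card ∧ (S.pairs.card ≤ M.pairs.card →
      ∀ i, S.pairedAt i → letter S col i ∈ K → M.pairedAt i) := by
  have hS : ∀ p ∈ S.pairs, (S.pairedAt p.1 ∧ letter S col p.1 ∈ K) ↔
      ¬ (S.pairedAt p.2 ∧ letter S col p.2 ∈ K) := fun p hp => by
    simp only [show S.pairedAt p.1 from ⟨p, hp, Or.inl rfl⟩,
      show S.pairedAt p.2 from ⟨p, hp, Or.inr rfl⟩, true_and]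
    exact (wcPair_letter hp).iff_not hGC hAU
  have hMS : ∀ p ∈ M.pairs, (S.pairedAt p.1 ∧ letter S col p.1 ∈ K) ∨
      (S.pairedAt p.2 ∧ letter S col p.2 ∈ K) := fun p hp =>
    ((wcPair_letter_of_compat hM hp).or hGC hAU).imp
      (fun h => ⟨hK _ ⟨p, hp, Or.inl rfl⟩ h, h⟩) (fun h => ⟨hK _ ⟨p, hp, Or.inr rfl⟩ h, h⟩)
  exact ⟨SecStr.card_le_card_of_endpoints (B := fun i => S.pairedAt i ∧ letter S col i ∈ K)
      (fun _ h => h.1) hMS hS,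
    fun hcard i hi hKi => SecStr.pairedAt_of_card_le
      (B := fun i => S.pairedAt i ∧ letter S col i ∈ K) (fun _ h => h.1) hMS hS hcard ⟨hi, hKi⟩⟩

theorem card_le_of_compat : M.pairs.card ≤ S.pairs.card :=
  (card_le_and_pairedAt_of_compat hM (K := {.C, .U}) (by simp) (by simp)
    fun _ _ h => pairedAt_of_letter_mem (by simp) h).1

variable (hcard : S.pairs.card ≤ M.pairs.card)
include hcard

theorem pairedAt_of_letter_ne_A_of_compat (h : letter S col i ≠ .A) : M.pairedAt i := by
  have hi := pairedAt_of_letter_ne_A h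
  by_cases hG : letter S col i = .G
  · exact (card_le_and_pairedAt_of_compat hM (K := {.G, .U}) (by simp) (by simp)
      fun _ _ h => pairedAt_of_letter_mem (by simp) h).2 hcard i hi (by simp [hG])
  · refine (card_le_and_pairedAt_of_compat hM (K := {.C, .U}) (by simp) (by simp)
      fun _ _ h => pairedAt_of_letter_mem (by simp) h).2 hcard i hi ?_
    revert h hG
    cases letter S col i <;> simp

theorem prefixLevel_snd_eq_of_compat {m : ℕ × ℕ} (hm : m ∈ M.pairs) :
    prefixLevel S col m.2 = prefixLevel S col (m.1 + 1) := by
  rw [prefixLevel, prefixLevel, ← Finset.sum_range_add_sum_Ico _ (M.lt m hm),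
    M.sum_Ico_eq_zero_of_mem hm _ (fun i hi => ?_)
      fun p hp => (wcPair_letter_of_compat hM hp).weight_add_weight, add_zero]
  by_contra h
  exact hi (pairedAt_of_letter_ne_A_of_compat hM hcard fun hA => h (by rw [hA]; rfl))

/-- An `A` paired in `M` with a `U` sits at the level of the gray pair owning the `U`; by
separation it cannot be unpaired in `S`. -/
theorem not_pairedAt_of_compat (hsep : separatedCol S col) (hu : ¬ S.pairedAt i) :
    ¬ M.pairedAt i := by
  rintro ⟨m, hm, hmi⟩
  have hwc := wcPair_letter_of_compat hM hm
  have hA := letter_of_not_pairedAt (col := col) hu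
  obtain ⟨j, hj, hU⟩ : ∃ j, (j = m.1 ∨ j = m.2) ∧ letter S col j = .U := by
    rcases hmi with rfl | rfl
    · exact ⟨m.2, Or.inr rfl, wcPair_A_iff.1 (hA ▸ hwc)⟩
    · exact ⟨m.1, Or.inl rfl, wcPair_A_iff.1 (hA ▸ hwc.symm)⟩
  have hL : ∀ x, (x = m.1 ∨ x = m.2) → prefixLevel S col x = prefixLevel S col m.2 ∧
      prefixLevel S col (x + 1) = prefixLevel S col m.2 := by
    have hw : (letter S col m.1).weight = 0 ∧ (letter S col m.2).weight = 0 := by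
      rcases hmi with rfl | rfl <;> rcases hj with rfl | rfl <;> simp_all [Base.weight]
    have e₁ : prefixLevel S col (m.1 + 1) = prefixLevel S col m.1 := by
      rw [prefixLevel, Finset.sum_range_succ, hw.1, add_zero, prefixLevel]
    have e₂ : prefixLevel S col (m.2 + 1) = prefixLevel S col m.2 := by
      rw [prefixLevel, Finset.sum_range_succ, hw.2, add_zero, prefixLevel]
    have e₃ := prefixLevel_snd_eq_of_compat hM hcard hm
    rintro x (rfl | rfl) <;> omega
  obtain ⟨g, hg, hcg, hgj⟩ := exists_gray_of_letter_eq_U hU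
  have hlen : i < S.len := (compat_designWord_iff.1 hM).1 ▸ SecStr.pairedAt.lt_len ⟨m, hm, hmi⟩
  refine hsep g hg hcg i ⟨hlen, hu⟩ ?_
  rw [unpLvl_eq_prefixLevel hu, (hL i (hmi.imp Eq.symm Eq.symm)).1]
  rcases hgj with h | h
  · rw [pairLvl_eq_prefixLevel_fst_add_one hg, h, (hL j hj).2]
  · rw [pairLvl_eq_prefixLevel_snd hg, h, (hL j hj).1]

theorem pairedAt_iff_of_compat (hsep : separatedCol S col) : M.pairedAt i ↔ S.pairedAt i := by
  have hMS : ∀ {j}, M.pairedAt j → S.pairedAt j := fun h =>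
    not_not.1 fun hu => not_pairedAt_of_compat hM hcard hsep hu h
  refine ⟨hMS, fun h => ?_⟩
  by_cases hA : letter S col i = .A
  · exact (card_le_and_pairedAt_of_compat hM (K := {.C, .A}) (by simp) (by simp)
      fun _ h _ => hMS h).2 hcard i h (by simp [hA])
  · exact pairedAt_of_letter_ne_A_of_compat hM hcard hA

theorem mem_pairs_of_compat (hpc : properCol S col) (hsep : separatedCol S col) {m : ℕ × ℕ}
    (hm : m ∈ M.pairs) : m ∈ S.pairs := by
  obtain ⟨n, hn⟩ : ∃ n, m.2 < n := ⟨_, lt_add_one _⟩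
  induction n generalizing m with
  | zero => exact absurd hn (Nat.not_lt_zero _)
  | succ n ih =>
    have hcl : S.IntervalClosed m.1 m.2 := by
      intro r hr hz
      obtain ⟨z, hz, hrz⟩ : ∃ z, (m.1 < z ∧ z < m.2) ∧ (r.1 = z ∨ r.2 = z) := by
        rcases hz with hz | hz
        exacts [⟨_, hz, Or.inl rfl⟩, ⟨_, hz, Or.inr rfl⟩]
      obtain ⟨r', hr', hr'z⟩ :=
        (pairedAt_iff_of_compat hM hcard hsep (i := z)).2 ⟨r, hr, hrz⟩
      have hin := M.intervalClosed_of_mem hm r' hr' (by rcases hr'z with rfl | rfl <;> simp [hz])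
      obtain rfl := S.eq_of_endpoint_eq (ih hr' (by omega)) hr hr'z hrz
      exact hin
    exact hpc.mem_pairs_of_intervalClosed (M.lt m hm) hcl
      ((pairedAt_iff_of_compat hM hcard hsep).1 ⟨m, hm, Or.inl rfl⟩)
      ((pairedAt_iff_of_compat hM hcard hsep).1 ⟨m, hm, Or.inr rfl⟩)
      (wcPair_letter_of_compat hM hm)

theorem eq_of_compat (hpc : properCol S col) (hsep : separatedCol S col) : M = S := by
  have hpairs : M.pairs = S.pairs :=
    Finset.eq_of_subset_of_card_le (fun _ hm => mem_pairs_of_compat hM hcard hpc hsep hm) hcard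
  have hlen := (compat_designWord_iff.1 hM).1
  cases M
  cases S
  simp_all

end Competitor

theorem energy_const_neg_one (w : List Base) (N : SecStr) :
    energy (fun _ _ => (-1 : ℝ)) w N = -N.pairs.card := by
  simp [energy]

/-- if the tree representation of S admits a separated proper
coloring, then S is designable over {A,U,C,G} in the Watson-Crick model. -/
theorem stmt14 (S : SecStr)
    (h : ∃ col : ℕ × ℕ → Col, properCol S col ∧ separatedCol S col) :
    ∃ w : List Base, isDesign wcPair (fun _ _ => (-1 : ℝ)) 1 w S := by
  obtain ⟨col, hpc, hsep⟩ := h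
  refine ⟨designWord S col, compat_designWord_iff.2 ⟨rfl, fun p hp => wcPair_letter hp⟩,
    fun M hM hne => ?_⟩
  have hlt : M.pairs.card < S.pairs.card := (card_le_of_compat hM).lt_of_ne fun h =>
    hne (eq_of_compat hM h.ge hpc hsep)
  rw [energy_const_neg_one, energy_const_neg_one, ge_iff_le, ← sub_nonneg]
  have : (M.pairs.card : ℝ) + 1 ≤ S.pairs.card := by exact_mod_cast hlt
  linarith
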